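/- arXiv:1903.00775 — 3 statements merged into one kernel-verified Lean document; each statement's English description precedes it below -/
import Mathlib

section
/- Let A ⊆ ℝⁿ be a bounded closed set with 0 ∈ A ⊆ B₁ and Ω := ℝⁿ \ A. Let u be continuous on the closure of Ω and infinity harmonic in Ω with limsup_{x→∞} |u(x)|/|x| < +∞. Then S_∞ = limsup_{x→∞} |u(x)|/|x| < +∞, and m⁻ − S⁻_∞|x| ≤ u(x) ≤ m⁺ + S⁺_∞|x| for all x ∈ Ω. -/
open Metric Set Filter Bornology Topology
open scoped RealInnerProductSpace

noncomputable section

/-- Euclidean space ℝⁿ. -/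
abbrev Euc (n : ℕ) := EuclideanSpace ℝ (Fin n)

/-- Comparison with cones from above (infinity subharmonic). -/
def CmpAbove {n : ℕ} (Ω : Set (Euc n)) (u : Euc n → ℝ) : Prop :=
  ∀ V : Set (Euc n), IsOpen V → IsBounded V → closure V ⊆ Ω →
    ∀ (x₀ : Euc n) (a b : ℝ),
      (∀ x ∈ frontier (V \ {x₀}), u x ≤ a * ‖x - x₀‖ + b) →
      ∀ x ∈ V, u x ≤ a * ‖x - x₀‖ + b

/-- Comparison with cones from below (infinity superharmonic). -/
def CmpBelow {n : ℕ} (Ω : Set (Euc n)) (u : Euc n → ℝ) : Prop :=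
  ∀ V : Set (Euc n), IsOpen V → IsBounded V → closure V ⊆ Ω →
    ∀ (x₀ : Euc n) (a b : ℝ),
      (∀ x ∈ frontier (V \ {x₀}), a * ‖x - x₀‖ + b ≤ u x) →
      ∀ x ∈ V, a * ‖x - x₀‖ + b ≤ u x

/-- Infinity harmonic = comparison with cones from both sides. -/
def InfHarmonic {n : ℕ} (Ω : Set (Euc n)) (u : Euc n → ℝ) : Prop :=
  CmpAbove Ω u ∧ CmpBelow Ω u

/-- m⁺ = max of u on ∂Ω. -/
def mP {n : ℕ} (Ω : Set (Euc n)) (u : Euc n → ℝ) : ℝ := sSup (u '' frontier Ω)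

/-- m⁻ = min of u on ∂Ω. -/
def mM {n : ℕ} (Ω : Set (Euc n)) (u : Euc n → ℝ) : ℝ := sInf (u '' frontier Ω)

/-- S⁺_r := (max(max_{∂B_r} u, m⁺) − m⁺)/r. -/
def SP {n : ℕ} (Ω : Set (Euc n)) (u : Euc n → ℝ) (r : ℝ) : ℝ :=
  (max (sSup (u '' sphere (0 : Euc n) r)) (mP Ω u) - mP Ω u) / r

/-- S⁻_r := (m⁻ − min(min_{∂B_r} u, m⁻))/r. -/
def SM {n : ℕ} (Ω : Set (Euc n)) (u : Euc n → ℝ) (r : ℝ) : ℝ :=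
  (mM Ω u - min (sInf (u '' sphere (0 : Euc n) r)) (mM Ω u)) / r

/-- Lip(u, S) := sup_{x≠y ∈ S} |u(x) − u(y)|/|x − y|. -/
def lipOn {n : ℕ} (u : Euc n → ℝ) (S : Set (Euc n)) : ℝ :=
  sSup ((fun p : Euc n × Euc n => |u p.1 - u p.2| / ‖p.1 - p.2‖) ''
    {p : Euc n × Euc n | p.1 ∈ S ∧ p.2 ∈ S ∧ p.1 ≠ p.2})

/-!
For `x ∈ Ω`, compare `u` with the cone `m⁺ + θ + S⁺_r ‖y‖` (vertex `0 ∈ A`) on `B_r` minus the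
closed `ε`-neighbourhood of `A`: on `∂B_r` this is the definition of `S⁺_r`, and on the inner
boundary uniform continuity of `u` near `∂Ω` gives `u ≤ m⁺ + θ` once `ε` is small. Letting
`r → ∞` and `θ → 0` gives the upper bound; applying it to `-u` gives the lower one.
Together they give `|u x| ≤ C + S_∞ ‖x‖`, so the limsup is at most `S_∞`. Conversely, if
`u ≤ c ‖x‖` near infinity then `S⁺_r ≤ c + |m⁺| / r`, so `S⁺_∞ ≤ c`, and likewise for `S⁻_∞`.
-/

section Slopes

variable {n : ℕ} {Ω A : Set (Euc n)} {u : Euc n → ℝ}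

lemma mem_compl_of_one_le_norm (hA1 : A ⊆ ball 0 1) {x : Euc n} (hx : 1 ≤ ‖x‖) : x ∈ Aᶜ :=
  fun hxA => (mem_ball_zero_iff.1 (hA1 hxA)).not_ge hx

lemma sphere_subset_closure_compl (hA1 : A ⊆ ball 0 1) {r : ℝ} (hr : 1 ≤ r) :
    sphere (0 : Euc n) r ⊆ closure Aᶜ := fun _ hz =>
  subset_closure (mem_compl_of_one_le_norm hA1 ((mem_sphere_zero_iff_norm.1 hz).symm ▸ hr))

lemma le_mP (hF : IsCompact (frontier Ω)) (hu : ContinuousOn u (frontier Ω)) {x : Euc n}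
    (hx : x ∈ frontier Ω) : u x ≤ mP Ω u :=
  le_csSup (hF.bddAbove_image hu) (mem_image_of_mem u hx)

lemma le_SP_mul_add {r : ℝ} (hr : 0 < r) (hu : BddAbove (u '' sphere 0 r)) {z : Euc n}
    (hz : z ∈ sphere 0 r) : u z ≤ SP Ω u r * r + mP Ω u := by
  rw [SP, div_mul_cancel₀ _ hr.ne', sub_add_cancel]
  exact (le_csSup hu (mem_image_of_mem u hz)).trans (le_max_left _ _)

lemma SP_nonneg {r : ℝ} (hr : 0 < r) : 0 ≤ SP Ω u r :=
  div_nonneg (sub_nonneg.2 (le_max_right _ _)) hr.le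

lemma image_neg_fun (s : Set (Euc n)) : (-u) '' s = -(u '' s) := by
  rw [← image_neg_eq_neg, image_image]
  rfl

lemma mP_neg : mP Ω (-u) = -mM Ω u := by
  rw [mP, mM, image_neg_fun, Real.sSup_neg]

lemma SP_neg : SP Ω (-u) = SM Ω u := by
  ext r
  rw [SP, SM, image_neg_fun, Real.sSup_neg, mP_neg, max_neg_neg]
  ring

lemma CmpBelow.neg (h : CmpBelow Ω u) : CmpAbove Ω (-u) := by
  intro V hV hVb hVΩ x₀ a b hfr x hx
  have := h V hV hVb hVΩ x₀ (-a) (-b) (fun z hz => by linarith [hfr z hz, Pi.neg_apply u z]) x hx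
  linarith [Pi.neg_apply u x]

end Slopes

lemma mem_frontier_of_infDist_eq_dist {E : Type*} [NormedAddCommGroup E] [NormedSpace ℝ E]
    {A : Set E} {y z : E} (hy : y ∈ A) (hz : z ∉ A) (h : infDist z A = dist z y) :
    y ∈ frontier A := by
  refine ⟨subset_closure hy, fun hyint => ?_⟩
  have hball : ball z (dist z y) ⊆ Aᶜ := fun w hw hwA =>
    (h ▸ infDist_le_dist_of_mem hwA).not_gt (by rwa [mem_ball, dist_comm] at hw)
  have hyz : dist z y ≠ 0 := dist_ne_zero.2 fun hzy => hz (hzy ▸ hy)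
  have hycl : y ∈ closure Aᶜ :=
    closure_mono hball (by rw [closure_ball z hyz, mem_closedBall, dist_comm])
  rw [closure_compl] at hycl
  exact hycl hyint

section Comparison

variable {n : ℕ} {A : Set (Euc n)} {u : Euc n → ℝ}

lemma exists_pos_lt_mP_add_of_infDist_lt (hAcl : IsClosed A) (hAbd : IsBounded A)
    (hAne : A.Nonempty) (hu : ContinuousOn u (closure Aᶜ)) {θ : ℝ} (hθ : 0 < θ) :
    ∃ δ > 0, ∀ z ∉ A, infDist z A < δ → u z < mP Aᶜ u + θ := by
  obtain ⟨R, hR⟩ := hAbd.subset_closedBall 0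
  have hK : IsCompact (closure Aᶜ ∩ closedBall 0 (R + 1)) :=
    (isCompact_closedBall _ _).of_isClosed_subset (isClosed_closure.inter isClosed_closedBall)
      inter_subset_right
  obtain ⟨δ, hδ, hUC⟩ := Metric.uniformContinuousOn_iff.1
    (hK.uniformContinuousOn_of_continuous (hu.mono inter_subset_left)) θ hθ
  have hAcp : IsCompact A := isCompact_of_isClosed_isBounded hAcl hAbd
  have hF : frontier Aᶜ ⊆ A := frontier_compl A ▸ hAcl.frontier_subset
  refine ⟨min δ 1, by positivity, fun z hz hzδ => ?_⟩
  obtain ⟨y, hyA, hyz⟩ := hAcp.exists_infDist_eq_dist hAne z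
  have hyF : y ∈ frontier Aᶜ := frontier_compl A ▸ mem_frontier_of_infDist_eq_dist hyA hz hyz
  have hzy : dist z y < min δ 1 := hyz ▸ hzδ
  have hzK : z ∈ closedBall 0 (R + 1) := by
    have hy : dist y 0 ≤ R := hR hyA
    rw [mem_closedBall]
    linarith [dist_triangle z y 0, min_le_right δ 1]
  have huzy := hUC z ⟨subset_closure hz, hzK⟩ y
    ⟨frontier_subset_closure hyF, closedBall_subset_closedBall (by linarith) (hR hyA)⟩
    (hzy.trans_le (min_le_left _ _))
  have huy := le_mP (hAcp.of_isClosed_subset isClosed_frontier hF)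
    (hu.mono frontier_subset_closure) hyF
  rw [Real.dist_eq] at huzy
  linarith [le_abs_self (u z - u y)]

/-- Compare `u` with a cone of vertex `0 ∈ A` on `ball 0 r` minus the `ε`-neighbourhood of `A`. -/
lemma CmpAbove.le_SP_mul_norm_add (hup : CmpAbove Aᶜ u) (h0A : (0 : Euc n) ∈ A) {r : ℝ}
    (hu : ContinuousOn u (sphere 0 r)) {ε b : ℝ} (hε : 0 < ε) (hmb : mP Aᶜ u ≤ b)
    (hinner : ∀ z, infDist z A = ε → u z ≤ b) {x : Euc n} (hx : ε < infDist x A)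
    (hxr : ‖x‖ < r) : u x ≤ SP Aᶜ u r * ‖x‖ + b := by
  have hr : 0 < r := (norm_nonneg x).trans_lt hxr
  have hd : Continuous (infDist · A) := continuous_infDist_pt A
  set V := ball (0 : Euc n) r ∩ {y | ε < infDist y A}
  have hclV : closure V ⊆ Aᶜ := fun y hy hyA => by
    have : ε ≤ infDist y A := closure_lt_subset_le continuous_const hd
      (closure_mono inter_subset_right hy)
    linarith [infDist_zero_of_mem hyA]
  have h0V : (0 : Euc n) ∉ V := fun h =>
    (h.2 : ε < infDist 0 A).not_ge (infDist_zero_of_mem h0A ▸ hε.le)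
  have hfr : ∀ z ∈ frontier (V \ {0}), u z ≤ SP Aᶜ u r * ‖z - 0‖ + b := by
    rw [sdiff_singleton_eq_self h0V]
    intro z hz
    rw [sub_zero]
    rcases frontier_inter_subset _ _ hz with ⟨hz, -⟩ | ⟨-, hz⟩
    · rw [frontier_ball 0 hr.ne'] at hz
      rw [mem_sphere_zero_iff_norm.1 hz]
      linarith [le_SP_mul_add (Ω := Aᶜ) hr ((isCompact_sphere 0 r).bddAbove_image hu) hz]
    · have := hinner z (frontier_lt_subset_eq continuous_const hd hz).symm
      linarith [mul_nonneg (SP_nonneg (Ω := Aᶜ) (u := u) hr) (norm_nonneg z)]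
  simpa using hup V (isOpen_ball.inter (isOpen_lt continuous_const hd))
    (isBounded_ball.subset inter_subset_left) hclV 0 _ b hfr x ⟨mem_ball_zero_iff.2 hxr, hx⟩

lemma le_mP_add_mul_norm (hAcl : IsClosed A) (hAbd : IsBounded A) (h0A : (0 : Euc n) ∈ A)
    (hA1 : A ⊆ ball 0 1) (hu : ContinuousOn u (closure Aᶜ)) (hup : CmpAbove Aᶜ u) {Sp : ℝ}
    (hSp : Tendsto (SP Aᶜ u) atTop (𝓝 Sp)) {x : Euc n} (hx : x ∈ Aᶜ) :
    u x ≤ mP Aᶜ u + Sp * ‖x‖ := by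
  refine le_of_forall_pos_le_add fun θ hθ => ?_
  obtain ⟨δ, hδ, hnear⟩ := exists_pos_lt_mP_add_of_infDist_lt hAcl hAbd ⟨0, h0A⟩ hu hθ
  have hxA : 0 < infDist x A := (hAcl.notMem_iff_infDist_pos ⟨0, h0A⟩).1 hx
  have hε : 0 < min (δ / 2) (infDist x A / 2) := by positivity
  have hinner : ∀ z, infDist z A = min (δ / 2) (infDist x A / 2) → u z ≤ mP Aᶜ u + θ :=
    fun z hz => (hnear z (fun hzA => by linarith [infDist_zero_of_mem (x := z) hzA])
      (by linarith [min_le_left (δ / 2) (infDist x A / 2)])).le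
  have hcone : ∀ᶠ r in atTop, u x ≤ SP Aᶜ u r * ‖x‖ + (mP Aᶜ u + θ) := by
    filter_upwards [eventually_gt_atTop (max ‖x‖ 1)] with r hr
    exact hup.le_SP_mul_norm_add h0A
      (hu.mono (sphere_subset_closure_compl hA1 ((le_max_right _ _).trans hr.le))) hε
      (by linarith) hinner (by linarith [min_le_right (δ / 2) (infDist x A / 2)])
      ((le_max_left _ _).trans_lt hr)
  linarith [ge_of_tendsto ((hSp.mul_const ‖x‖).add_const (mP Aᶜ u + θ)) hcone]

lemma mM_sub_mul_norm_le (hAcl : IsClosed A) (hAbd : IsBounded A) (h0A : (0 : Euc n) ∈ A)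
    (hA1 : A ⊆ ball 0 1) (hu : ContinuousOn u (closure Aᶜ)) (hlo : CmpBelow Aᶜ u) {Sm : ℝ}
    (hSm : Tendsto (SM Aᶜ u) atTop (𝓝 Sm)) {x : Euc n} (hx : x ∈ Aᶜ) :
    mM Aᶜ u - Sm * ‖x‖ ≤ u x := by
  have := le_mP_add_mul_norm hAcl hAbd h0A hA1 hu.neg hlo.neg (SP_neg ▸ hSm) hx
  rw [mP_neg, Pi.neg_apply] at this
  linarith

end Comparison

section Growth

variable {n : ℕ} {Ω : Set (Euc n)} {u : Euc n → ℝ}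

lemma SP_le_add_abs_mP_div {r c : ℝ} (hr : 0 < r) (hc : 0 ≤ c)
    (h : ∀ z ∈ sphere (0 : Euc n) r, u z ≤ c * r) : SP Ω u r ≤ c + |mP Ω u| / r := by
  have hcr : 0 ≤ c * r := mul_nonneg hc hr.le
  have hsup : sSup (u '' sphere 0 r) ≤ c * r := Real.sSup_le (forall_mem_image.2 h) hcr
  rw [SP, div_le_iff₀ hr, add_mul, div_mul_cancel₀ _ hr.ne', sub_le_iff_le_add]
  exact max_le (by linarith [neg_abs_le (mP Ω u)]) (by linarith [abs_nonneg (mP Ω u)])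

lemma le_of_tendsto_SP {Sp c : ℝ} (hSp : Tendsto (SP Ω u) atTop (𝓝 Sp)) (hc : 0 ≤ c)
    (h : ∀ᶠ x in cobounded (Euc n), u x ≤ c * ‖x‖) : Sp ≤ c := by
  rw [← comap_norm_atTop, eventually_comap, eventually_atTop] at h
  obtain ⟨R, hR⟩ := h
  have hbound : ∀ᶠ r in atTop, SP Ω u r ≤ c + |mP Ω u| / r := by
    filter_upwards [eventually_gt_atTop (max R 0)] with r hr
    refine SP_le_add_abs_mP_div ((le_max_right _ _).trans_lt hr) hc fun z hz => ?_
    have hzr := mem_sphere_zero_iff_norm.1 hz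
    exact hzr ▸ hR r ((le_max_left _ _).trans hr.le) z hzr
  simpa using le_of_tendsto_of_tendsto hSp
    (tendsto_const_nhds.add (tendsto_const_nhds.div_atTop tendsto_id)) hbound

lemma le_limsup_abs_div_norm [Nonempty (Fin n)] {Sp : ℝ} (hSp : Tendsto (SP Ω u) atTop (𝓝 Sp))
    (hbdd : IsBoundedUnder (· ≤ ·) (cobounded (Euc n)) fun x => |u x| / ‖x‖) :
    Sp ≤ limsup (fun x => |u x| / ‖x‖) (cobounded (Euc n)) := by
  refine le_of_forall_gt_imp_ge_of_dense fun c hc => ?_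
  have hlt := eventually_lt_of_limsup_lt hc hbdd
  obtain ⟨x₀, hx₀⟩ := hlt.exists
  refine le_of_tendsto_SP hSp ((div_nonneg (abs_nonneg _) (norm_nonneg _)).trans hx₀.le) ?_
  filter_upwards [hlt, tendsto_norm_cobounded_atTop.eventually_gt_atTop 0] with x hx hx0
  calc u x ≤ |u x| := le_abs_self _
    _ = |u x| / ‖x‖ * ‖x‖ := (div_mul_cancel₀ _ hx0.ne').symm
    _ ≤ c * ‖x‖ := mul_le_mul_of_nonneg_right hx.le hx0.le

end Growth

lemma limsup_abs_div_norm_le {E : Type*} [NormedAddCommGroup E] [(cobounded E).NeBot]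
    {f : E → ℝ} {C S : ℝ} (h : ∀ᶠ x in cobounded E, |f x| ≤ C + S * ‖x‖) :
    IsBoundedUnder (· ≤ ·) (cobounded E) (fun x => |f x| / ‖x‖) ∧
      limsup (fun x => |f x| / ‖x‖) (cobounded E) ≤ S := by
  have hg : Tendsto (fun x : E => C / ‖x‖ + S) (cobounded E) (𝓝 S) := by
    simpa using (tendsto_const_nhds.div_atTop tendsto_norm_cobounded_atTop).add_const S
  have hfg : (fun x => |f x| / ‖x‖) ≤ᶠ[cobounded E] fun x => C / ‖x‖ + S := by
    filter_upwards [h, tendsto_norm_cobounded_atTop.eventually_gt_atTop 0] with x hx hx0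
    rw [div_add' _ _ _ hx0.ne']
    exact div_le_div_of_nonneg_right hx hx0.le
  have hbdd : IsBoundedUnder (· ≤ ·) (cobounded E) (fun x => |f x| / ‖x‖) :=
    hg.isBoundedUnder_le.mono_le hfg
  refine ⟨hbdd, (limsup_le_limsup hfg ?_ hg.isBoundedUnder_le).trans_eq hg.limsup_eq⟩
  exact isBoundedUnder_of_eventually_ge (Eventually.of_forall fun x => by positivity)
    |>.isCoboundedUnder_le

theorem stmt1_general {n : ℕ} (hn : 0 < n) (A : Set (Euc n)) (hAcl : IsClosed A) (hAbd : IsBounded A)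
    (h0A : (0 : Euc n) ∈ A) (hA1 : A ⊆ ball 0 1)
    (u : Euc n → ℝ) (hu : ContinuousOn u (closure Aᶜ)) (hIH : InfHarmonic Aᶜ u)
    (Sp Sm : ℝ) (hSp : Tendsto (SP Aᶜ u) atTop (𝓝 Sp))
    (hSm : Tendsto (SM Aᶜ u) atTop (𝓝 Sm)) :
    max Sp Sm = limsup (fun x => |u x| / ‖x‖) (cobounded (Euc n)) ∧
      ∀ x ∈ Aᶜ, mM Aᶜ u - Sm * ‖x‖ ≤ u x ∧ u x ≤ mP Aᶜ u + Sp * ‖x‖ := by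
  have : Nonempty (Fin n) := ⟨⟨0, hn⟩⟩
  have hupper := fun x (hx : x ∈ Aᶜ) => le_mP_add_mul_norm hAcl hAbd h0A hA1 hu hIH.1 hSp hx
  have hlower := fun x (hx : x ∈ Aᶜ) => mM_sub_mul_norm_le hAcl hAbd h0A hA1 hu hIH.2 hSm hx
  have hgrowth : ∀ᶠ x in cobounded (Euc n), |u x| ≤ (|mP Aᶜ u| + |mM Aᶜ u|) + max Sp Sm * ‖x‖ := by
    filter_upwards [tendsto_norm_cobounded_atTop.eventually_ge_atTop 1] with x hx
    have hxA := mem_compl_of_one_le_norm hA1 hx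
    have hSpx := mul_le_mul_of_nonneg_right (le_max_left Sp Sm) (norm_nonneg x)
    have hSmx := mul_le_mul_of_nonneg_right (le_max_right Sp Sm) (norm_nonneg x)
    rw [abs_le]
    constructor <;> linarith [hupper x hxA, hlower x hxA, le_abs_self (mP Aᶜ u),
      neg_abs_le (mM Aᶜ u), abs_nonneg (mP Aᶜ u), abs_nonneg (mM Aᶜ u)]
  obtain ⟨hbdd, hle⟩ := limsup_abs_div_norm_le hgrowth
  have hSm' : Sm ≤ limsup (fun x => |(-u) x| / ‖x‖) (cobounded (Euc n)) :=
    le_limsup_abs_div_norm (SP_neg ▸ hSm) (by simpa only [Pi.neg_apply, abs_neg] using hbdd)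
  simp only [Pi.neg_apply, abs_neg] at hSm'
  exact ⟨le_antisymm (max_le (le_limsup_abs_div_norm hSp hbdd) hSm') hle,
    fun x hx => ⟨hlower x hx, hupper x hx⟩⟩

/-- S_∞ = limsup_{x→∞} |u(x)|/|x| and m⁻ − S⁻_∞|x| ≤ u(x) ≤ m⁺ + S⁺_∞|x| in Ω. -/
theorem stmt1 {n : ℕ} (hn : 0 < n) (A : Set (Euc n)) (hAcl : IsClosed A) (hAbd : IsBounded A)
    (h0A : (0 : Euc n) ∈ A) (hA1 : A ⊆ ball 0 1)
    (u : Euc n → ℝ) (hu : ContinuousOn u (closure Aᶜ)) (hIH : InfHarmonic Aᶜ u)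
    (hgrow : IsBoundedUnder (· ≤ ·) (cobounded (Euc n)) fun x => |u x| / ‖x‖)
    (Sp Sm : ℝ) (hSp : Tendsto (SP Aᶜ u) atTop (𝓝 Sp))
    (hSm : Tendsto (SM Aᶜ u) atTop (𝓝 Sm)) :
    max Sp Sm = limsup (fun x => |u x| / ‖x‖) (cobounded (Euc n)) ∧
      ∀ x ∈ Aᶜ, mM Aᶜ u - Sm * ‖x‖ ≤ u x ∧ u x ≤ mP Aᶜ u + Sp * ‖x‖ :=
  stmt1_general hn A hAcl hAbd h0A hA1 u hu hIH Sp Sm hSp hSm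
end
end

section
/- Let 1 < R, let u be continuous on the closed annulus \overline{B_R} \ B₁ and infinity harmonic in the open annulus B_R \ \overline{B₁}, let y be a point of the closed annulus, and let L ≥ 0. If |u(x) − u(y)| ≤ L|x − y| for all x ∈ ∂B_R ∪ ∂B₁, then |u(z) − u(y)| ≤ L|z − y| for all z in the closed annulus. -/
open Metric Set Filter Bornology Topology
open scoped RealInnerProductSpace

noncomputable section

lemma cmpAbove_neg {n : ℕ} {Ω : Set (Euc n)} {u : Euc n → ℝ}
    (h : CmpBelow Ω u) : CmpAbove Ω (fun x => -u x) := by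
  intro V hV hb hc x₀ a b hfr x hx
  have key := h V hV hb hc x₀ (-a) (-b) (fun w hw => by
    have := hfr w hw
    simp only at this
    linarith) x hx
  simp only
  linarith

lemma half_lemma {n : ℕ} (R : ℝ) (hR : 1 < R) (u : Euc n → ℝ)
    (hu : ContinuousOn u (closedBall (0 : Euc n) R \ ball 0 1))
    (hA : CmpAbove (ball (0 : Euc n) R \ closedBall 0 1) u)
    (y : Euc n) (hy : y ∈ closedBall (0 : Euc n) R \ ball 0 1)
    (L : ℝ) (hL : 0 ≤ L)
    (hbd : ∀ x ∈ sphere (0 : Euc n) R ∪ sphere (0 : Euc n) 1, u x - u y ≤ L * ‖x - y‖) :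
    ∀ z ∈ closedBall (0 : Euc n) R \ ball 0 1, u z - u y ≤ L * ‖z - y‖ := by
  set K : Set (Euc n) := closedBall (0 : Euc n) R \ ball 0 1 with hK
  intro z hz
  have hz1 : ‖z‖ ≤ R := mem_closedBall_zero_iff.mp hz.1
  have hz2 : 1 ≤ ‖z‖ := by
    have := hz.2
    rw [mem_ball_zero_iff, not_lt] at this
    exact this
  by_cases hzR : ‖z‖ = R
  · exact hbd z (Or.inl (mem_sphere_zero_iff_norm.mpr hzR))
  by_cases hz1' : ‖z‖ = 1
  · exact hbd z (Or.inr (mem_sphere_zero_iff_norm.mpr hz1'))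
  have hzR' : ‖z‖ < R := lt_of_le_of_ne hz1 hzR
  have hz1'' : 1 < ‖z‖ := lt_of_le_of_ne hz2 (Ne.symm hz1')
  -- suffices to show the bound up to any δ > 0
  have goal : ∀ δ : ℝ, 0 < δ → u z - u y ≤ L * ‖z - y‖ + δ := by
    intro δ hδ
    -- uniform continuity on the compact annulus
    have hKcpt : IsCompact K := (isCompact_closedBall (0 : Euc n) R).diff isOpen_ball
    have huc : UniformContinuousOn u K := hKcpt.uniformContinuousOn_of_continuous hu
    obtain ⟨η, hη, hmod⟩ := Metric.uniformContinuousOn_iff.mp huc (δ/2) (by linarith)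
    set ε : ℝ := min (min ((R - ‖z‖)/2) ((‖z‖ - 1)/2)) (min (η/2) (δ/(2*(L+1)))) with hεdef
    have hε0 : 0 < ε := by
      apply lt_min (lt_min (by linarith) (by linarith)) (lt_min (by linarith) (by positivity))
    have hεa : ε ≤ (R - ‖z‖)/2 := le_trans (min_le_left _ _) (min_le_left _ _)
    have hεb : ε ≤ (‖z‖ - 1)/2 := le_trans (min_le_left _ _) (min_le_right _ _)
    have hεc : ε ≤ η/2 := le_trans (min_le_right _ _) (min_le_left _ _)
    have hεd : ε ≤ δ/(2*(L+1)) := le_trans (min_le_right _ _) (min_le_right _ _)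
    have hLε : L * ε ≤ δ/2 := by
      have h1 : L * ε ≤ L * (δ/(2*(L+1))) := mul_le_mul_of_nonneg_left hεd hL
      have h2 : L * (δ/(2*(L+1))) ≤ δ/2 := by
        rw [mul_div_assoc', div_le_div_iff₀ (by positivity) (by norm_num : (0:ℝ) < 2)]
        nlinarith
      linarith
    set V : Set (Euc n) := ball (0 : Euc n) (R - ε) \ closedBall 0 (1 + ε) with hV
    have hVopen : IsOpen V := isOpen_ball.sdiff Metric.isClosed_closedBall
    have hVbdd : IsBounded V := Metric.isBounded_ball.subset diff_subset
    set C : Set (Euc n) := closedBall (0 : Euc n) (R - ε) ∩ {x | 1 + ε ≤ ‖x‖} with hC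
    have hCclosed : IsClosed C :=
      Metric.isClosed_closedBall.inter (isClosed_le continuous_const continuous_norm)
    have hVC : closure V ⊆ C := by
      apply closure_minimal _ hCclosed
      intro x hx
      refine ⟨mem_closedBall_zero_iff.mpr (le_of_lt (mem_ball_zero_iff.mp hx.1)), ?_⟩
      have := hx.2
      rw [mem_closedBall_zero_iff, not_le] at this
      exact le_of_lt this
    have hVcl : closure V ⊆ ball (0 : Euc n) R \ closedBall 0 1 := by
      intro x hx
      obtain ⟨h1, h2⟩ := hVC hx
      rw [mem_closedBall_zero_iff] at h1
      constructor
      · exact mem_ball_zero_iff.mpr (by linarith)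
      · rw [mem_closedBall_zero_iff]
        push_neg
        simp only [Set.mem_setOf_eq] at h2
        linarith
    -- the key estimate on near-boundary points
    have main : ∀ x : Euc n, x ∈ K → ∀ r' : ℝ, 1 ≤ r' → r' ≤ R → (r' = R ∨ r' = 1) →
        |‖x‖ - r'| = ε → u x ≤ L * ‖x - y‖ + (u y + δ) := by
      intro x hxK r' hr'1 hr'R hror hdist
      have hxpos : (0:ℝ) < ‖x‖ := by
        have := hxK.2
        rw [mem_ball_zero_iff, not_lt] at this
        linarith
      set x' : Euc n := (r' / ‖x‖) • x with hx'def
      have hx'norm : ‖x'‖ = r' := by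
        rw [hx'def, norm_smul, Real.norm_eq_abs, abs_div, abs_of_pos hxpos,
          abs_of_pos (by linarith : (0:ℝ) < r'), div_mul_cancel₀]
        exact ne_of_gt hxpos
      have hsub : x - x' = ((‖x‖ - r') / ‖x‖) • x := by
        rw [hx'def, sub_div, div_self (ne_of_gt hxpos), sub_smul, one_smul]
      have hdiff : ‖x - x'‖ = ε := by
        rw [hsub, norm_smul, Real.norm_eq_abs, abs_div, abs_of_pos hxpos,
          div_mul_cancel₀ _ (ne_of_gt hxpos), hdist]
      have hx'K : x' ∈ K := by
        constructor
        · exact mem_closedBall_zero_iff.mpr (by rw [hx'norm]; exact hr'R)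
        · rw [mem_ball_zero_iff, not_lt, hx'norm]; exact hr'1
      have hclose : dist (u x) (u x') < δ/2 := by
        apply hmod x hxK x' hx'K
        rw [dist_eq_norm, hdiff]
        linarith
      have hclose' : u x - u x' ≤ δ/2 := by
        have := le_of_lt hclose
        rw [Real.dist_eq] at this
        have := le_of_abs_le this
        linarith
      have hbdx' : u x' - u y ≤ L * ‖x' - y‖ :=
        hbd x' (by
          rcases hror with h | h
          · exact Or.inl (mem_sphere_zero_iff_norm.mpr (by rw [hx'norm, h]))
          · exact Or.inr (mem_sphere_zero_iff_norm.mpr (by rw [hx'norm, h])))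
      have htri : ‖x' - y‖ ≤ ‖x - y‖ + ε := by
        calc ‖x' - y‖ ≤ ‖x' - x‖ + ‖x - y‖ := norm_sub_le_norm_sub_add_norm_sub _ _ _
        _ = ε + ‖x - y‖ := by rw [norm_sub_rev, hdiff]
        _ = ‖x - y‖ + ε := by ring
      have hLtri : L * ‖x' - y‖ ≤ L * ‖x - y‖ + L * ε := by
        have := mul_le_mul_of_nonneg_left htri hL
        linarith [this]
      linarith
    -- the frontier bound
    have hfr : ∀ x ∈ frontier (V \ {y}), u x ≤ L * ‖x - y‖ + (u y + δ) := by
      intro x hx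
      have hsplit : frontier (V \ {y}) ⊆ frontier V ∪ ({y} : Set (Euc n)) := by
        rw [Set.diff_eq]
        refine (frontier_inter_subset _ _).trans ?_
        intro w hw
        rcases hw with ⟨h, _⟩ | ⟨_, h⟩
        · exact Or.inl h
        · right
          rw [frontier_compl] at h
          exact (frontier_subset_closure.trans (by rw [closure_singleton])) h
      rcases hsplit hx with hxF | hxy
      · -- x on the frontier of V
        have hxc : x ∈ C := hVC (frontier_subset_closure hxF)
        have hxn : x ∉ V := by
          rw [hVopen.frontier_eq] at hxF
          exact hxF.2
        have h1 : ‖x‖ ≤ R - ε := mem_closedBall_zero_iff.mp hxc.1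
        have h2 : 1 + ε ≤ ‖x‖ := hxc.2
        have hxK : x ∈ K := by
          constructor
          · exact mem_closedBall_zero_iff.mpr (by linarith)
          · rw [mem_ball_zero_iff, not_lt]; linarith
        have hcases : ‖x‖ = R - ε ∨ ‖x‖ = 1 + ε := by
          by_contra hcon
          push_neg at hcon
          apply hxn
          refine ⟨mem_ball_zero_iff.mpr (lt_of_le_of_ne h1 hcon.1), ?_⟩
          rw [mem_closedBall_zero_iff, not_le]
          exact lt_of_le_of_ne h2 (Ne.symm hcon.2)
        rcases hcases with h | h
        · exact main x hxK R hR.le le_rfl (Or.inl rfl) (by rw [h]; rw [abs_of_nonpos (by linarith)]; ring)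
        · exact main x hxK 1 le_rfl hR.le (Or.inr rfl) (by rw [h]; rw [abs_of_nonneg (by linarith)]; ring)
      · -- x = y
        rw [Set.mem_singleton_iff] at hxy
        subst hxy
        simp only [sub_self, norm_zero, mul_zero, zero_add]
        linarith
    have hzV : z ∈ V := by
      refine ⟨mem_ball_zero_iff.mpr (by linarith), ?_⟩
      rw [mem_closedBall_zero_iff, not_le]
      linarith
    have := hA V hVopen hVbdd hVcl y L (u y + δ) hfr z hzV
    linarith
  -- conclude
  have : u z - u y - L * ‖z - y‖ ≤ 0 := by
    by_contra hcon
    push_neg at hcon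
    have := goal ((u z - u y - L * ‖z - y‖)/2) (by linarith)
    linarith
  linarith

/-- Lipschitz bound on boundary of an annulus propagates inside. -/
theorem stmt3 {n : ℕ} (R : ℝ) (hR : 1 < R) (u : Euc n → ℝ)
    (hu : ContinuousOn u (closedBall (0 : Euc n) R \ ball 0 1))
    (hIH : InfHarmonic (ball (0 : Euc n) R \ closedBall 0 1) u)
    (y : Euc n) (hy : y ∈ closedBall (0 : Euc n) R \ ball 0 1)
    (L : ℝ) (hL : 0 ≤ L)
    (hbd : ∀ x ∈ sphere (0 : Euc n) R ∪ sphere (0 : Euc n) 1, |u x - u y| ≤ L * ‖x - y‖) :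
    ∀ z ∈ closedBall (0 : Euc n) R \ ball 0 1, |u z - u y| ≤ L * ‖z - y‖ := by
  intro z hz
  have h1 := half_lemma R hR u hu hIH.1 y hy L hL
    (fun x hx => le_trans (le_abs_self _) (hbd x hx)) z hz
  have h2 := half_lemma R hR (fun x => -u x) hu.neg (cmpAbove_neg hIH.2) y hy L hL
    (fun x hx => by
      have := hbd x hx
      have h := neg_abs_le (u x - u y)
      linarith) z hz
  rw [abs_sub_le_iff]
  exact ⟨h1, by linarith⟩
end
end

section
/- (Theorem 2(i), existence) Let A ⊆ ℝⁿ be a bounded closed set with 0 ∈ A ⊆ B₁, Ω := ℝⁿ \ A, and let g : ∂Ω → ℝ be continuous. For any λ ∈ ℝ, there exists a function u, continuous on the closure of Ω and infinity harmonic in Ω, such that u = g on ∂Ω and the function x ↦ u(x) − λ|x| attains both its maximum and its minimum over the closure of Ω on ∂Ω; that is, with c⁺ := max_{∂Ω}(g(x) − λ|x|) and c⁻ := min_{∂Ω}(g(x) − λ|x|), one has c⁻ + λ|x| ≤ u(x) ≤ c⁺ + λ|x| in Ω. -/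
/-!
Perron's method with cones as barriers. A cone with vertex outside `Ω` compares with every cone:
on `V` minus the other vertex the difference of the two cones is either convex along a ray from
a vertex, so it obeys the maximum principle, or it is a convex sum of two upward cones, whose
minimum is attained at a vertex. Let `Ψ` be the infimum of `λ|x| + c⁺` and of the upward cones
with vertex on `∂Ω`, slope at least `|λ|`, lying above `g` on `∂Ω`; it satisfies comparison
from below. The supremum `u` of the functions below `Ψ` satisfying comparison from above is
locally Lipschitz, and it satisfies comparison from below, since otherwise it could be raised
by a cone on a small open set. Finally `λ|x| + c⁻ ≤ u ≤ Ψ ≤ λ|x| + c⁺`, and the downward and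
upward barrier cones at a boundary point squeeze `u` to `g` there, continuously.
-/

open Metric Set Filter Bornology Topology
open scoped RealInnerProductSpace

noncomputable section

section ExitPoints

variable {X : Type*} [TopologicalSpace X]

theorem IsPreconnected.inter_frontier_nonempty {s t : Set X} (hs : IsPreconnected s)
    (hst : (s ∩ t).Nonempty) (hst' : (s \ t).Nonempty) : (s ∩ frontier t).Nonempty := by
  by_contra h
  have hcover : s ⊆ interior t ∪ (closure t)ᶜ := fun x hx => by
    by_contra hx'
    simp only [mem_union, mem_compl_iff, not_or, not_not] at hx'
    exact h ⟨x, hx, hx'.2, hx'.1⟩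
  have hdisj : Disjoint (interior t) (closure t)ᶜ :=
    disjoint_compl_right.mono_left (interior_subset.trans subset_closure)
  rcases hs.subset_or_subset isOpen_interior isClosed_closure.isOpen_compl hdisj hcover with
    hs' | hs'
  · obtain ⟨x, hx, hxt⟩ := hst'
    exact hxt (interior_subset (hs' hx))
  · obtain ⟨x, hx, hxt⟩ := hst
    exact hs' hx (subset_closure hxt)

theorem exists_mem_uIcc_mem_frontier {γ : ℝ → X} (hγ : Continuous γ) {U : Set X} {r s : ℝ}
    (hr : γ r ∈ U) (hs : γ s ∉ U) : ∃ t ∈ uIcc r s, γ t ∈ frontier U := by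
  obtain ⟨_, ⟨t, ht, rfl⟩, hfr⟩ :=
    (isPreconnected_uIcc.image γ hγ.continuousOn).inter_frontier_nonempty
      ⟨γ r, mem_image_of_mem γ left_mem_uIcc, hr⟩ ⟨γ s, mem_image_of_mem γ right_mem_uIcc, hs⟩
  exact ⟨t, ht, hfr⟩

theorem exists_mem_frontier_le_of_convexOn {γ : ℝ → X} (hγ : Continuous γ) {U : Set X}
    {f : X → ℝ} {s r t : ℝ} (hsr : s ≤ r) (hrt : r ≤ t) (hf : ConvexOn ℝ (Icc s t) (f ∘ γ))
    (hs : γ s ∉ U) (hr : γ r ∈ U) (ht : γ t ∉ U) : ∃ p ∈ frontier U, f (γ r) ≤ f p := by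
  obtain ⟨t₁, ht₁, hp₁⟩ := exists_mem_uIcc_mem_frontier hγ hr hs
  obtain ⟨t₂, ht₂, hp₂⟩ := exists_mem_uIcc_mem_frontier hγ hr ht
  rw [uIcc_of_ge hsr] at ht₁
  rw [uIcc_of_le hrt] at ht₂
  have hr₁₂ : r ∈ segment ℝ t₁ t₂ := by
    rw [segment_eq_Icc (ht₁.2.trans ht₂.1)]
    exact ⟨ht₁.2, ht₂.1⟩
  rcases le_max_iff.1 (hf.le_on_segment ⟨ht₁.1, ht₁.2.trans hrt⟩ ⟨hsr.trans ht₂.1, ht₂.2⟩ hr₁₂)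
    with h | h
  · exact ⟨_, hp₁, h⟩
  · exact ⟨_, hp₂, h⟩

theorem mem_frontier_diff_singleton_self [T1Space X] {p : X} [(𝓝[≠] p).NeBot] {V : Set X}
    (hV : IsOpen V) (hp : p ∈ V) : p ∈ frontier (V \ {p}) := by
  rw [(hV.sdiff isClosed_singleton).frontier_eq]
  refine ⟨?_, fun h => h.2 rfl⟩
  simpa [sdiff_eq] using hV.inter_closure ⟨hp, (closure_compl_singleton p).symm ▸ mem_univ p⟩

theorem frontier_inter_diff_singleton_subset [T1Space X] {W O : Set X} (hW : IsOpen W)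
    (hO : IsOpen O) (y : X) : frontier ((W ∩ O) \ {y}) ⊆ frontier (W \ {y}) ∪ (W \ O) := by
  intro p hp
  rw [((hW.inter hO).sdiff isClosed_singleton).frontier_eq] at hp
  rw [(hW.sdiff isClosed_singleton).frontier_eq]
  by_cases hpWO : p ∈ W \ O
  · exact Or.inr hpWO
  refine Or.inl ⟨closure_mono (sdiff_subset_sdiff_left inter_subset_left) hp.1, fun h => ?_⟩
  exact hp.2 ⟨⟨h.1, not_not.1 fun hpO => hpWO ⟨h.1, hpO⟩⟩, h.2⟩

end ExitPoints

section ConeInequalities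

variable {E : Type*} [SeminormedAddCommGroup E]

theorem neg_cone_le_cone {z z' : E} {L L' α β : ℝ} (hL : 0 ≤ L) (hL' : 0 ≤ L')
    (hz : -L' * ‖z - z'‖ + α ≤ β) (hz' : α ≤ L * ‖z' - z‖ + β) (x : E) :
    -L' * ‖x - z'‖ + α ≤ L * ‖x - z‖ + β := by
  have h₁ : ‖z' - z‖ ≤ ‖x - z'‖ + ‖x - z‖ := by
    rw [norm_sub_rev x z']
    exact norm_sub_le_norm_sub_add_norm_sub z' x z
  have h₂ : ‖z - z'‖ ≤ ‖x - z‖ + ‖x - z'‖ := by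
    rw [norm_sub_rev x z]
    exact norm_sub_le_norm_sub_add_norm_sub z x z'
  rcases le_total L L' with h | h
  · nlinarith [mul_le_mul_of_nonneg_left h₁ hL, norm_nonneg (x - z')]
  · nlinarith [mul_le_mul_of_nonneg_left h₂ hL', norm_nonneg (x - z)]

theorem mul_norm_le_mul_norm_add (lam : ℝ) (x z : E) :
    lam * ‖x‖ ≤ lam * ‖z‖ + |lam| * ‖x - z‖ := by
  have h₁ := mul_le_mul_of_nonneg_left (abs_norm_sub_norm_le x z) (abs_nonneg lam)
  have h₂ := le_abs_self (lam * (‖x‖ - ‖z‖))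
  rw [abs_mul] at h₂
  nlinarith

end ConeInequalities

section Cones

variable {E : Type*} [NormedAddCommGroup E] [NormedSpace ℝ E]

theorem exists_lineMap_notMem {U : Set E} (hU : IsBounded U) {q z : E} (hqz : q ≠ z) :
    ∃ T : ℝ, 1 ≤ T ∧ AffineMap.lineMap q z T ∉ U := by
  obtain ⟨r, hr⟩ := (isBounded_iff_subset_closedBall q).1 hU
  have hd : 0 < dist q z := dist_pos.2 hqz
  refine ⟨max 1 ((r + 1) / dist q z), le_max_left _ _, fun h => ?_⟩
  have h1 := mem_closedBall.1 (hr h)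
  rw [dist_lineMap_left, Real.norm_of_nonneg (by positivity)] at h1
  have h2 : (r + 1) / dist q z * dist q z ≤ max 1 ((r + 1) / dist q z) * dist q z :=
    mul_le_mul_of_nonneg_right (le_max_right _ _) hd.le
  rw [div_mul_cancel₀ _ hd.ne'] at h2
  linarith

/-- Along the ray from `q` through `z` the term `e‖x - q‖` is linear, so the function is
convex there, and the ray leaves `U` on both sides of `z`. -/
theorem exists_mem_frontier_cone_le {U : Set E} (hU : IsBounded U) {q z : E} (hq : q ∉ U)
    (hz : z ∈ U) (y : E) {c : ℝ} (hc : 0 ≤ c) (e : ℝ) :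
    ∃ p ∈ frontier U, c * ‖z - y‖ + e * ‖z - q‖ ≤ c * ‖p - y‖ + e * ‖p - q‖ := by
  set γ : ℝ →ᵃ[ℝ] E := AffineMap.lineMap q z
  obtain ⟨T, hT, hTU⟩ := exists_lineMap_notMem hU fun h : q = z => hq (h ▸ hz)
  have hconv : ConvexOn ℝ (Icc 0 T) (fun t => c * dist (γ t) y + e * dist q z * t) := by
    have h1 : ConvexOn ℝ univ (fun t => dist (γ t) y) := by
      have := (convexOn_dist y convex_univ).comp_affineMap γ
      rwa [preimage_univ] at this
    have h2 : ConvexOn ℝ univ (fun t : ℝ => e * dist q z * t) :=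
      LinearMap.convexOn (LinearMap.mulLeft ℝ (e * dist q z)) convex_univ
    exact ((h1.smul hc).add h2).subset (subset_univ _) (convex_Icc 0 T)
  have heq : EqOn (fun t => c * dist (γ t) y + e * dist q z * t)
      ((fun x => c * ‖x - y‖ + e * ‖x - q‖) ∘ γ) (Icc 0 T) := by
    intro t ht
    simp only [Function.comp, ← dist_eq_norm, γ, dist_lineMap_left, Real.norm_of_nonneg ht.1]
    ring
  obtain ⟨p, hp, hle⟩ := exists_mem_frontier_le_of_convexOn AffineMap.lineMap_continuous
    zero_le_one hT (hconv.congr heq) (by simpa [γ] using hq) (by simpa [γ] using hz) hTU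
  exact ⟨p, hp, by simpa [γ] using hle⟩

theorem exists_mem_frontier_le_of_convexOn_of_le {U : Set E} {f : E → ℝ}
    (hf : ConvexOn ℝ univ f) {z w : E} (hz : z ∈ U) (hw : w ∉ U) (hwz : f w ≤ f z) :
    ∃ p ∈ frontier U, f p ≤ f z := by
  obtain ⟨t, ht, hp⟩ :=
    exists_mem_uIcc_mem_frontier (AffineMap.lineMap_continuous (p := z) (q := w))
      (r := 0) (s := 1) (by simpa using hz) (by simpa using hw)
  rw [uIcc_of_le zero_le_one] at ht
  exact ⟨_, hp, (hf.le_on_segment (mem_univ z) (mem_univ w) (lineMap_mem_segment ℝ z w ht)).trans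
    (max_le le_rfl hwz)⟩

theorem exists_mem_frontier_cone_add_cone_le {U : Set E} {x₀ x₁ z : E} (hx₀ : x₀ ∉ U)
    (hx₁ : x₁ ∉ U) (hz : z ∈ U) {c c' : ℝ} (hc : 0 ≤ c) (hc' : 0 ≤ c') :
    ∃ p ∈ frontier U, c * ‖p - x₀‖ + c' * ‖p - x₁‖ ≤ c * ‖z - x₀‖ + c' * ‖z - x₁‖ := by
  set f : E → ℝ := fun x => c * dist x x₀ + c' * dist x x₁
  have hf : ConvexOn ℝ univ f :=
    ((convexOn_dist x₀ convex_univ).smul hc).add ((convexOn_dist x₁ convex_univ).smul hc')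
  have htri : dist x₀ x₁ ≤ dist z x₀ + dist z x₁ := dist_triangle_left _ _ _
  -- `f` is minimal at the vertex with the larger slope
  obtain ⟨w, hw, hwz⟩ : ∃ w ∉ U, f w ≤ f z := by
    rcases le_total c' c with h | h
    · refine ⟨x₀, hx₀, ?_⟩
      simp only [f, dist_self]
      nlinarith [dist_nonneg (x := z) (y := x₀)]
    · refine ⟨x₁, hx₁, ?_⟩
      simp only [f, dist_self, dist_comm x₁ x₀]
      nlinarith [dist_nonneg (x := z) (y := x₁)]
  simpa [f, dist_eq_norm] using exists_mem_frontier_le_of_convexOn_of_le hf hz hw hwz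

theorem cone_le_cone_of_frontier {V : Set E} (hV : IsOpen V) (hVb : IsBounded V) {x₀ : E}
    (hx₀ : x₀ ∉ V) {x₁ : E} {a b a' b' : ℝ}
    (h : ∀ x ∈ frontier (V \ {x₁}), a * ‖x - x₀‖ + b ≤ a' * ‖x - x₁‖ + b') :
    ∀ x ∈ V, a * ‖x - x₀‖ + b ≤ a' * ‖x - x₁‖ + b' := by
  intro z hz
  by_cases hz₁ : z = x₁
  · subst hz₁
    have : Nontrivial E := ⟨⟨z, x₀, ne_of_mem_of_not_mem hz hx₀⟩⟩
    exact h z (mem_frontier_diff_singleton_self hV hz)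
  have hzU : z ∈ V \ {x₁} := ⟨hz, hz₁⟩
  have hx₀U : x₀ ∉ V \ {x₁} := fun h => hx₀ h.1
  have hx₁U : x₁ ∉ V \ {x₁} := fun h => h.2 rfl
  have hUb : IsBounded (V \ {x₁}) := hVb.subset sdiff_subset
  suffices ∃ p ∈ frontier (V \ {x₁}),
      a * ‖z - x₀‖ - a' * ‖z - x₁‖ ≤ a * ‖p - x₀‖ - a' * ‖p - x₁‖ by
    obtain ⟨p, hp, hle⟩ := this
    linarith [h p hp]
  rcases le_or_gt 0 a with ha | ha
  · obtain ⟨p, hp, hle⟩ := exists_mem_frontier_cone_le hUb hx₁U hzU x₀ ha (-a')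
    exact ⟨p, hp, by linarith⟩
  rcases le_or_gt a' 0 with ha' | ha'
  · obtain ⟨p, hp, hle⟩ := exists_mem_frontier_cone_le hUb hx₀U hzU x₁ (neg_nonneg.2 ha') a
    exact ⟨p, hp, by linarith⟩
  · obtain ⟨p, hp, hle⟩ :=
      exists_mem_frontier_cone_add_cone_le hx₀U hx₁U hzU (neg_nonneg.2 ha.le) ha'.le
    exact ⟨p, hp, by linarith⟩

end Cones

section Comparison

variable {n : ℕ} {Ω : Set (Euc n)}

theorem cmpAbove_cone {p : Euc n} (hp : p ∉ Ω) (a b : ℝ) :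
    CmpAbove Ω (fun x => a * ‖x - p‖ + b) :=
  fun _ hV hVb hVΩ _ _ _ h =>
    cone_le_cone_of_frontier hV hVb (fun hpV => hp (hVΩ (subset_closure hpV))) h

theorem cmpBelow_cone {p : Euc n} (hp : p ∉ Ω) (a b : ℝ) :
    CmpBelow Ω (fun x => a * ‖x - p‖ + b) := by
  intro V hV hVb hVΩ x₀ a' b' h x hx
  have := cone_le_cone_of_frontier hV hVb (fun hpV => hp (hVΩ (subset_closure hpV)))
    (a := -a) (b := -b) (a' := -a') (b' := -b') (fun y hy => by linarith [h y hy]) x hx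
  linarith

theorem infHarmonic_empty (u : Euc n → ℝ) : InfHarmonic ∅ u :=
  ⟨fun _ _ _ hV _ _ _ _ x hx => absurd (hV (subset_closure hx)) (notMem_empty x),
    fun _ _ _ hV _ _ _ _ x hx => absurd (hV (subset_closure hx)) (notMem_empty x)⟩

theorem cmpAbove_sSup {S : Set (Euc n → ℝ)} (hS : S.Nonempty)
    (hbdd : ∀ x, BddAbove ((· x) '' S)) (h : ∀ v ∈ S, CmpAbove Ω v) :
    CmpAbove Ω (fun x => sSup ((· x) '' S)) := by
  intro V hV hVb hVΩ x₀ a b hfr x hx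
  refine csSup_le (hS.image _) ?_
  rintro _ ⟨v, hv, rfl⟩
  exact h v hv V hV hVb hVΩ x₀ a b
    (fun y hy => (le_csSup (hbdd y) (mem_image_of_mem _ hv)).trans (hfr y hy)) x hx

theorem cmpBelow_sInf {S : Set (Euc n → ℝ)} (hS : S.Nonempty)
    (hbdd : ∀ x, BddBelow ((· x) '' S)) (h : ∀ v ∈ S, CmpBelow Ω v) :
    CmpBelow Ω (fun x => sInf ((· x) '' S)) := by
  intro V hV hVb hVΩ x₀ a b hfr x hx
  refine le_csInf (hS.image _) ?_
  rintro _ ⟨v, hv, rfl⟩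
  exact h v hv V hV hVb hVΩ x₀ a b
    (fun y hy => (hfr y hy).trans (csInf_le (hbdd y) (mem_image_of_mem _ hv))) x hx

theorem CmpAbove.le_of_closedBall_subset {u : Euc n → ℝ} (hu : CmpAbove Ω u) {p : Euc n}
    {r C : ℝ} (hr : 0 < r) (hpΩ : closedBall p r ⊆ Ω) (hC : ∀ x ∈ sphere p r, u x ≤ C) :
    ∀ q ∈ ball p r, u q ≤ (C - u p) / r * ‖q - p‖ + u p := by
  refine hu _ isOpen_ball isBounded_ball (closure_ball_subset_closedBall.trans hpΩ) p _ _ ?_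
  intro x hx
  rw [(isOpen_ball.sdiff isClosed_singleton).frontier_eq] at hx
  by_cases hxp : x = p
  · simp [hxp]
  have hxr : ‖x - p‖ = r := by
    have h₁ := mem_closedBall.1 (closure_ball_subset_closedBall (closure_mono sdiff_subset hx.1))
    have h₂ : ¬ dist x p < r := fun h => hx.2 ⟨h, hxp⟩
    rw [← dist_eq_norm]
    linarith [not_lt.1 h₂]
  rw [hxr, div_mul_cancel₀ _ hr.ne']
  linarith [hC x (by rwa [mem_sphere, dist_eq_norm])]

theorem CmpAbove.lipschitzOnWith {u : Euc n → ℝ} (hu : CmpAbove Ω u) {y : Euc n}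
    {r C₀ C₁ : ℝ} (hr : 0 < r) (hΩ : closedBall y (3 * r) ⊆ Ω)
    (h₀ : ∀ x ∈ closedBall y (3 * r), C₀ ≤ u x) (h₁ : ∀ x ∈ closedBall y (3 * r), u x ≤ C₁) :
    LipschitzOnWith ((C₁ - C₀) / (2 * r)).toNNReal u (ball y r) := by
  refine LipschitzOnWith.of_le_add_mul' _ fun q hq p hp => ?_
  have hp' := mem_ball.1 hp
  have hsub : closedBall p (2 * r) ⊆ closedBall y (3 * r) :=
    closedBall_subset_closedBall' (by linarith)
  have hqp : q ∈ ball p (2 * r) := by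
    rw [mem_ball]
    linarith [dist_triangle_right q p y, mem_ball.1 hq]
  have hup : C₀ ≤ u p := h₀ p (mem_closedBall.2 (by linarith))
  have := hu.le_of_closedBall_subset (by positivity) (hsub.trans hΩ)
    (fun x hx => h₁ x (hsub (sphere_subset_closedBall hx))) q hqp
  rw [← dist_eq_norm] at this
  have : (C₁ - u p) / (2 * r) * dist q p ≤ (C₁ - C₀) / (2 * r) * dist q p := by
    gcongr
  linarith

theorem CmpAbove.continuousOn {u f₀ f₁ : Euc n → ℝ} (hΩ : IsOpen Ω) (hu : CmpAbove Ω u)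
    (hf₀ : Continuous f₀) (hf₁ : Continuous f₁) (h₀ : f₀ ≤ u) (h₁ : u ≤ f₁) :
    ContinuousOn u Ω := by
  intro y hy
  obtain ⟨ε, hε, hball⟩ := Metric.isOpen_iff.1 hΩ y hy
  have hΩ' : closedBall y (3 * (ε / 4)) ⊆ Ω := (closedBall_subset_ball (by linarith)).trans hball
  obtain ⟨C₀, hC₀⟩ := (isCompact_closedBall y (3 * (ε / 4))).bddBelow_image hf₀.continuousOn
  obtain ⟨C₁, hC₁⟩ := (isCompact_closedBall y (3 * (ε / 4))).bddAbove_image hf₁.continuousOn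
  have hlip := hu.lipschitzOnWith (by positivity) hΩ'
    (fun x hx => (hC₀ (mem_image_of_mem _ hx)).trans (h₀ x))
    (fun x hx => (h₁ x).trans (hC₁ (mem_image_of_mem _ hx)))
  exact (hlip.continuousOn.continuousAt (ball_mem_nhds y (by positivity))).continuousWithinAt

theorem CmpAbove.piecewise_cone {u : Euc n → ℝ} (hu : CmpAbove Ω u) {O : Set (Euc n)}
    [DecidablePred (· ∈ O)] (hO : IsOpen O) {x₀ : Euc n} (hx₀ : x₀ ∉ O) {a b : ℝ}
    (hle : ∀ x ∈ O, u x ≤ a * ‖x - x₀‖ + b) (hge : ∀ x ∈ closure O \ O, a * ‖x - x₀‖ + b ≤ u x) :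
    CmpAbove Ω (O.piecewise (fun x => a * ‖x - x₀‖ + b) u) := by
  set v := O.piecewise (fun x => a * ‖x - x₀‖ + b) u
  have huv : ∀ x, u x ≤ v x := fun x => by
    by_cases hx : x ∈ O <;> simp [v, hx, hle]
  have hcv : ∀ x ∈ closure O, a * ‖x - x₀‖ + b ≤ v x := fun x hx => by
    by_cases hxO : x ∈ O
    · simp [v, hxO]
    · simpa [v, hxO] using hge x ⟨hx, hxO⟩
  intro W hW hWb hWΩ y₀ a' b' hfr x hx
  have huW := hu W hW hWb hWΩ y₀ a' b' fun p hp => (huv p).trans (hfr p hp)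
  by_cases hxO : x ∈ O
  swap
  · simpa [v, hxO] using huW x hx
  simp only [v, piecewise_eq_of_mem _ _ _ hxO]
  refine cone_le_cone_of_frontier (hW.inter hO) (hWb.subset inter_subset_left)
    (fun h => hx₀ h.2) (fun p hp => ?_) x ⟨hx, hxO⟩
  have hpO : p ∈ closure O :=
    closure_mono (sdiff_subset.trans inter_subset_right) (frontier_subset_closure hp)
  rcases frontier_inter_diff_singleton_subset hW hO y₀ hp with hp' | hp'
  · exact (hcv p hpO).trans (hfr p hp')
  · exact (hge p ⟨hpO, hp'.2⟩).trans (huW p hp'.1)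

end Comparison

section Perron

variable {n : ℕ} {Ω : Set (Euc n)} {Ψ : Euc n → ℝ}

def perronEnvelope (Ω : Set (Euc n)) (Ψ : Euc n → ℝ) (x : Euc n) : ℝ :=
  sSup ((· x) '' {v | CmpAbove Ω v ∧ v ≤ Ψ})

theorem bddAbove_image_subsolutions (x : Euc n) : BddAbove ((· x) '' {v | CmpAbove Ω v ∧ v ≤ Ψ}) :=
  ⟨Ψ x, by rintro _ ⟨v, hv, rfl⟩; exact hv.2 x⟩

theorem le_perronEnvelope {v : Euc n → ℝ} (hv : CmpAbove Ω v) (hvΨ : v ≤ Ψ) :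
    v ≤ perronEnvelope Ω Ψ :=
  fun x => le_csSup (bddAbove_image_subsolutions x) (mem_image_of_mem _ ⟨hv, hvΨ⟩)

theorem perronEnvelope_le (hne : ∃ v, CmpAbove Ω v ∧ v ≤ Ψ) : perronEnvelope Ω Ψ ≤ Ψ := by
  obtain ⟨v, hv⟩ := hne
  exact fun x => csSup_le ⟨v x, mem_image_of_mem _ hv⟩ (by rintro _ ⟨w, hw, rfl⟩; exact hw.2 x)

theorem cmpAbove_perronEnvelope (hne : ∃ v, CmpAbove Ω v ∧ v ≤ Ψ) :
    CmpAbove Ω (perronEnvelope Ω Ψ) :=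
  cmpAbove_sSup hne bddAbove_image_subsolutions fun _ hv => hv.1

/-- If the envelope `u` fell below a cone `C` inside `V`, then on the open set where `u < C - δ`
it could be replaced by `C - δ`, giving a larger admissible subsolution. -/
theorem cmpBelow_perronEnvelope [Nontrivial (Euc n)] (hΨ : CmpBelow Ω Ψ)
    (hne : ∃ v, CmpAbove Ω v ∧ v ≤ Ψ) (hc : ContinuousOn (perronEnvelope Ω Ψ) Ω) :
    CmpBelow Ω (perronEnvelope Ω Ψ) := by
  classical
  set u := perronEnvelope Ω Ψ
  intro V hV hVb hVΩ x₀ a b hfr z hz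
  by_contra! hlt
  set δ := (a * ‖z - x₀‖ + b - u z) / 2
  have hδ : 0 < δ := by simp only [δ]; linarith
  set f : Euc n → ℝ := fun x => u x - (a * ‖x - x₀‖ + b)
  have hU : IsOpen (V \ {x₀}) := hV.sdiff isClosed_singleton
  have hfU : ContinuousOn f (closure (V \ {x₀})) :=
    (hc.mono ((closure_mono sdiff_subset).trans hVΩ)).sub (by fun_prop)
  set O := (V \ {x₀}) ∩ f ⁻¹' Iio (-δ)
  have hO : IsOpen O := (hfU.mono subset_closure).isOpen_inter_preimage hU isOpen_Iio
  have hclO : ∀ x ∈ closure O, x ∈ V \ {x₀} ∧ f x ≤ -δ := by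
    intro x hx
    have hsub : O ⊆ closure (V \ {x₀}) ∩ f ⁻¹' Iic (-δ) :=
      fun y hy => ⟨subset_closure hy.1, show f y ≤ -δ from le_of_lt hy.2⟩
    have hx' := closure_minimal hsub
      (hfU.preimage_isClosed_of_isClosed isClosed_closure isClosed_Iic) hx
    refine ⟨by_contra fun hxU => ?_, hx'.2⟩
    have := hfr x (by rw [hU.frontier_eq]; exact ⟨hx'.1, hxU⟩)
    linarith [show f x ≤ -δ from hx'.2]
  have hzO : z ∈ O := by
    have hzx₀ : z ≠ x₀ := by
      rintro rfl
      linarith [hfr z (mem_frontier_diff_singleton_self hV hz)]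
    exact ⟨⟨hz, hzx₀⟩, show f z < -δ by simp only [f, δ]; linarith⟩
  have hv := (cmpAbove_perronEnvelope hne).piecewise_cone hO (a := a) (b := b - δ)
    (fun h => (hclO x₀ (subset_closure h)).1.2 rfl)
    (fun x hx => by linarith [show f x < -δ from hx.2])
    (fun x hx => by
      have : ¬ f x < -δ := fun h => hx.2 ⟨(hclO x hx.1).1, h⟩
      linarith)
  have hCΨ := hΨ V hV hVb hVΩ x₀ a b fun x hx => (hfr x hx).trans (perronEnvelope_le hne x)
  have hvΨ : O.piecewise (fun x => a * ‖x - x₀‖ + (b - δ)) u ≤ Ψ := fun x => by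
    by_cases hxO : x ∈ O
    · simp only [piecewise_eq_of_mem _ _ _ hxO]
      linarith [hCΨ x hxO.1.1]
    · simpa [hxO] using perronEnvelope_le hne x
  have : _ ≤ u z := le_perronEnvelope hv hvΨ z
  simp only [piecewise_eq_of_mem _ _ _ hzO] at this
  linarith [show δ = (a * ‖z - x₀‖ + b - u z) / 2 from rfl]

end Perron

section Barriers

variable {X : Type*} [PseudoMetricSpace X]

theorem exists_abs_sub_le_add_mul_dist {K : Set X} {g : X → ℝ} {z : X}
    (hg : ContinuousWithinAt g K z) {M : ℝ} (hM : ∀ y ∈ K, |g y - g z| ≤ M) {ε : ℝ}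
    (hε : 0 < ε) : ∃ L, ∀ y ∈ K, |g y - g z| ≤ ε + L * dist y z := by
  obtain ⟨ρ, hρ, hball⟩ := Metric.continuousWithinAt_iff.1 hg ε hε
  refine ⟨|M| / ρ, fun y hy => ?_⟩
  rcases lt_or_ge (dist y z) ρ with h | h
  · have := hball hy h
    rw [Real.dist_eq] at this
    have : 0 ≤ |M| / ρ * dist y z := by positivity
    linarith
  · have : |M| ≤ |M| / ρ * dist y z := by
      rw [div_mul_eq_mul_div, le_div_iff₀ hρ]
      exact mul_le_mul_of_nonneg_left h (abs_nonneg M)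
    linarith [hM y hy, le_abs_self M]

theorem continuousAt_of_forall_abs_sub_le {f : X → ℝ} {z : X}
    (h : ∀ ε > 0, ∃ L, ∀ y, |f y - f z| ≤ ε + L * dist y z) : ContinuousAt f z := by
  refine Metric.continuousAt_iff.2 fun ε hε => ?_
  obtain ⟨L, hL⟩ := h (ε / 2) (by positivity)
  refine ⟨ε / 2 / (|L| + 1), by positivity, fun y hy => ?_⟩
  have h₁ : L * dist y z ≤ (|L| + 1) * dist y z :=
    mul_le_mul_of_nonneg_right (by linarith [le_abs_self L]) dist_nonneg
  have h₂ : (|L| + 1) * dist y z < ε / 2 := (lt_div_iff₀' (by positivity)).1 hy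
  rw [Real.dist_eq]
  linarith [hL y]

end Barriers

section UpperEnvelope

variable {n : ℕ} {K : Set (Euc n)} {g : Euc n → ℝ} {lam cm cp : ℝ}

def upperBarriers (K : Set (Euc n)) (g : Euc n → ℝ) (lam c : ℝ) : Set (Euc n → ℝ) :=
  insert (fun x => lam * ‖x‖ + c)
    {w | ∃ z ∈ K, ∃ L β : ℝ, |lam| ≤ L ∧ (∀ y ∈ K, g y ≤ L * ‖y - z‖ + β) ∧
      w = fun x => L * ‖x - z‖ + β}

def upperEnvelope (K : Set (Euc n)) (g : Euc n → ℝ) (lam c : ℝ) (x : Euc n) : ℝ :=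
  sInf ((· x) '' upperBarriers K g lam c)

theorem cone_le_of_mem_upperBarriers (hcm : ∀ y ∈ K, cm ≤ g y - lam * ‖y‖) (hc : cm ≤ cp)
    {w : Euc n → ℝ} (hw : w ∈ upperBarriers K g lam cp) :
    (fun x => lam * ‖x‖ + cm) ≤ w := by
  rcases hw with rfl | ⟨z, hz, L, β, hL, hgw, rfl⟩
  · exact fun x => by simp only; linarith
  intro x
  have := hgw z hz
  simp only [sub_self, norm_zero, mul_zero, zero_add] at this
  linarith [hcm z hz, mul_norm_le_mul_norm_add lam x z,
    mul_le_mul_of_nonneg_right hL (norm_nonneg (x - z))]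

theorem bddBelow_upperBarriers_apply (hcm : ∀ y ∈ K, cm ≤ g y - lam * ‖y‖) (hc : cm ≤ cp)
    (x : Euc n) : BddBelow ((· x) '' upperBarriers K g lam cp) :=
  ⟨lam * ‖x‖ + cm, by rintro _ ⟨w, hw, rfl⟩; exact cone_le_of_mem_upperBarriers hcm hc hw x⟩

theorem cone_le_upperEnvelope (hcm : ∀ y ∈ K, cm ≤ g y - lam * ‖y‖) (hc : cm ≤ cp) :
    (fun x => lam * ‖x‖ + cm) ≤ upperEnvelope K g lam cp := fun x =>
  le_csInf ((insert_nonempty _ _).image _)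
    (by rintro _ ⟨w, hw, rfl⟩; exact cone_le_of_mem_upperBarriers hcm hc hw x)

theorem upperEnvelope_le (hcm : ∀ y ∈ K, cm ≤ g y - lam * ‖y‖) (hc : cm ≤ cp)
    {w : Euc n → ℝ} (hw : w ∈ upperBarriers K g lam cp) :
    upperEnvelope K g lam cp ≤ w := fun x =>
  csInf_le (bddBelow_upperBarriers_apply hcm hc x) (mem_image_of_mem _ hw)

theorem cmpBelow_upperEnvelope {Ω : Set (Euc n)} (hKΩ : ∀ z ∈ K, z ∉ Ω)
    (h0 : (0 : Euc n) ∉ Ω) (hcm : ∀ y ∈ K, cm ≤ g y - lam * ‖y‖) (hc : cm ≤ cp) :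
    CmpBelow Ω (upperEnvelope K g lam cp) := by
  refine cmpBelow_sInf (insert_nonempty _ _) (bddBelow_upperBarriers_apply hcm hc) ?_
  rintro w (rfl | ⟨z, hz, L, β, -, -, rfl⟩)
  · simpa using cmpBelow_cone h0 lam cp
  · exact cmpBelow_cone (hKΩ z hz) L β

theorem neg_cone_le_upperEnvelope (hcp : ∀ y ∈ K, g y - lam * ‖y‖ ≤ cp) {z : Euc n}
    (hz : z ∈ K) {L α : ℝ} (hL : |lam| ≤ L) (hα : ∀ y ∈ K, -L * ‖y - z‖ + α ≤ g y) :
    (fun x => -L * ‖x - z‖ + α) ≤ upperEnvelope K g lam cp := by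
  have hαz : α ≤ g z := by simpa using hα z hz
  refine fun x => le_csInf ((insert_nonempty _ _).image _) ?_
  rintro _ ⟨w, rfl | ⟨z', hz', L', β, hL', hgw, rfl⟩, rfl⟩
  · show -L * ‖x - z‖ + α ≤ lam * ‖x‖ + cp
    have := mul_norm_le_mul_norm_add lam z x
    rw [norm_sub_rev] at this
    linarith [hcp z hz, mul_le_mul_of_nonneg_right hL (norm_nonneg (x - z))]
  · have hgz' := hgw z' hz'
    simp only [sub_self, norm_zero, mul_zero, zero_add] at hgz'
    refine neg_cone_le_cone ((abs_nonneg lam).trans hL') ((abs_nonneg lam).trans hL) ?_ ?_ x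
    · linarith [hα z' hz']
    · linarith [hgw z hz]

end UpperEnvelope

section Existence

variable {n : ℕ} {Ω : Set (Euc n)} {g : Euc n → ℝ} {lam cm cp : ℝ}

theorem exists_abs_perronEnvelope_sub_le (hKΩ : ∀ z ∈ frontier Ω, z ∉ Ω)
    (hK : IsCompact (frontier Ω)) (hg : ContinuousOn g (frontier Ω))
    (hcm : ∀ y ∈ frontier Ω, cm ≤ g y - lam * ‖y‖) (hcp : ∀ y ∈ frontier Ω, g y - lam * ‖y‖ ≤ cp)
    (hc : cm ≤ cp) (hne : ∃ v, CmpAbove Ω v ∧ v ≤ upperEnvelope (frontier Ω) g lam cp)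
    {z : Euc n} (hz : z ∈ frontier Ω) {ε : ℝ} (hε : 0 < ε) :
    ∃ L, ∀ x, |perronEnvelope Ω (upperEnvelope (frontier Ω) g lam cp) x - g z|
      ≤ ε + L * dist x z := by
  obtain ⟨M, hM⟩ := hK.exists_bound_of_continuousOn (f := fun y => g y - g z)
    (hg.sub continuousOn_const)
  obtain ⟨L, hL⟩ := exists_abs_sub_le_add_mul_dist (hg z hz) (M := M)
    (fun y hy => by simpa [Real.norm_eq_abs] using hM y hy) hε
  set L' := max L |lam|
  have hgL : ∀ y ∈ frontier Ω, |g y - g z| ≤ ε + L' * ‖y - z‖ := fun y hy =>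
    (hL y hy).trans (by rw [dist_eq_norm]; gcongr; exact le_max_left _ _)
  have hupper : (fun x => L' * ‖x - z‖ + (g z + ε)) ∈ upperBarriers (frontier Ω) g lam cp :=
    mem_insert_of_mem _ ⟨z, hz, L', g z + ε, le_max_right _ _,
      fun y hy => by linarith [(abs_le.1 (hgL y hy)).2], rfl⟩
  have hlow := le_perronEnvelope (cmpAbove_cone (hKΩ z hz) (-L') (g z - ε))
    (neg_cone_le_upperEnvelope hcp hz (le_max_right _ _)
      fun y hy => by linarith [(abs_le.1 (hgL y hy)).1])
  have hhigh := (perronEnvelope_le hne).trans (upperEnvelope_le hcm hc hupper)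
  refine ⟨L', fun x => ?_⟩
  have h₁ : -L' * ‖x - z‖ + (g z - ε) ≤ _ := hlow x
  have h₂ : _ ≤ L' * ‖x - z‖ + (g z + ε) := hhigh x
  rw [dist_eq_norm, abs_le]
  constructor <;> linarith

theorem exists_infHarmonic_extension [Nontrivial (Euc n)] (hΩ : IsOpen Ω)
    (h0 : (0 : Euc n) ∉ Ω) (hK : IsCompact (frontier Ω)) (hg : ContinuousOn g (frontier Ω))
    (hcm : ∀ y ∈ frontier Ω, cm ≤ g y - lam * ‖y‖) (hcp : ∀ y ∈ frontier Ω, g y - lam * ‖y‖ ≤ cp)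
    (hc : cm ≤ cp) :
    ∃ u : Euc n → ℝ, ContinuousOn u (closure Ω) ∧ InfHarmonic Ω u ∧
      (∀ x ∈ frontier Ω, u x = g x) ∧ ∀ x, cm + lam * ‖x‖ ≤ u x ∧ u x ≤ cp + lam * ‖x‖ := by
  have hKΩ : ∀ z ∈ frontier Ω, z ∉ Ω := fun z hz hzΩ =>
    (hΩ.inter_frontier_eq.subset ⟨hzΩ, hz⟩ : z ∈ (∅ : Set (Euc n)))
  set Ψ := upperEnvelope (frontier Ω) g lam cp
  set u := perronEnvelope Ω Ψ
  have hw₀ : CmpAbove Ω (fun x => lam * ‖x‖ + cm) := by simpa using cmpAbove_cone h0 lam cm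
  have hne : ∃ v, CmpAbove Ω v ∧ v ≤ Ψ := ⟨_, hw₀, cone_le_upperEnvelope hcm hc⟩
  have hu₀ : (fun x => lam * ‖x‖ + cm) ≤ u := le_perronEnvelope hw₀ (cone_le_upperEnvelope hcm hc)
  have hu₁ : u ≤ fun x => lam * ‖x‖ + cp :=
    (perronEnvelope_le hne).trans (upperEnvelope_le hcm hc (mem_insert _ _))
  have hcont : ContinuousOn u Ω :=
    (cmpAbove_perronEnvelope hne).continuousOn hΩ (by fun_prop) (by fun_prop) hu₀ hu₁
  have hbar := fun z (hz : z ∈ frontier Ω) ε (hε : 0 < ε) =>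
    exists_abs_perronEnvelope_sub_le hKΩ hK hg hcm hcp hc hne hz hε
  have hbdry : ∀ z ∈ frontier Ω, u z = g z := fun z hz => eq_of_forall_dist_le fun ε hε => by
    obtain ⟨L, hL⟩ := hbar z hz ε hε
    simpa [Real.dist_eq] using hL z
  refine ⟨u, ?_, ⟨cmpAbove_perronEnvelope hne,
    cmpBelow_perronEnvelope (cmpBelow_upperEnvelope hKΩ h0 hcm hc) hne hcont⟩, hbdry,
    fun x => ⟨by linarith [hu₀ x], by linarith [hu₁ x]⟩⟩
  rw [closure_eq_self_union_frontier]
  rintro x (hx | hx)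
  · exact (hcont.continuousAt (hΩ.mem_nhds hx)).continuousWithinAt
  · refine (continuousAt_of_forall_abs_sub_le fun ε hε => ?_).continuousWithinAt
    obtain ⟨L, hL⟩ := hbar x hx ε hε
    exact ⟨L, fun y => by rw [hbdry x hx]; exact hL y⟩

end Existence

theorem stmt12_general {n : ℕ} (A : Set (Euc n)) (hAcl : IsClosed A) (hAbd : IsBounded A)
    (h0A : (0 : Euc n) ∈ A)
    (g : Euc n → ℝ) (hg : ContinuousOn g (frontier Aᶜ)) (lam : ℝ) :
    ∃ u : Euc n → ℝ, ContinuousOn u (closure Aᶜ) ∧ InfHarmonic Aᶜ u ∧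
      (∀ x ∈ frontier Aᶜ, u x = g x) ∧
      ∀ x ∈ Aᶜ,
        sInf ((fun y => g y - lam * ‖y‖) '' frontier Aᶜ) + lam * ‖x‖ ≤ u x ∧
        u x ≤ sSup ((fun y => g y - lam * ‖y‖) '' frontier Aᶜ) + lam * ‖x‖ := by
  rcases Aᶜ.eq_empty_or_nonempty with hA | ⟨x₁, hx₁⟩
  · exact ⟨g, by simp [hA], hA ▸ infHarmonic_empty g, fun _ _ => rfl, by simp [hA]⟩
  have : Nontrivial (Euc n) := ⟨⟨x₁, 0, fun h => hx₁ (h ▸ h0A)⟩⟩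
  have hK : IsCompact (frontier Aᶜ) := by
    rw [frontier_compl]
    exact Metric.isCompact_of_isClosed_isBounded isClosed_frontier
      (hAbd.subset hAcl.frontier_subset)
  have hKne : (frontier Aᶜ).Nonempty :=
    nonempty_frontier_iff.2 ⟨⟨x₁, hx₁⟩, fun h => (h ▸ mem_univ 0 : (0 : Euc n) ∈ Aᶜ) h0A⟩
  have himg : IsCompact ((fun y => g y - lam * ‖y‖) '' frontier Aᶜ) :=
    hK.image_of_continuousOn (hg.sub (continuous_const.mul continuous_norm).continuousOn)
  obtain ⟨u, hu, hharm, hbdry, hbounds⟩ := exists_infHarmonic_extension hAcl.isOpen_compl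
    (fun h => h h0A) hK hg (lam := lam)
    (fun y hy => csInf_le himg.bddBelow (mem_image_of_mem _ hy))
    (fun y hy => le_csSup himg.bddAbove (mem_image_of_mem _ hy))
    (csInf_le_csSup (hKne.image _) himg.bddBelow himg.bddAbove)
  exact ⟨u, hu, hharm, hbdry, fun x _ => hbounds x⟩

/-- Theorem 2(i), existence: for any boundary data g and any λ there is an
exterior infinity harmonic function with u = g on ∂Ω and c⁻ + λ|x| ≤ u ≤ c⁺ + λ|x| in Ω. -/
theorem stmt12 {n : ℕ} (A : Set (Euc n)) (hAcl : IsClosed A) (hAbd : IsBounded A)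
    (h0A : (0 : Euc n) ∈ A) (hA1 : A ⊆ ball 0 1)
    (g : Euc n → ℝ) (hg : ContinuousOn g (frontier Aᶜ)) (lam : ℝ) :
    ∃ u : Euc n → ℝ, ContinuousOn u (closure Aᶜ) ∧ InfHarmonic Aᶜ u ∧
      (∀ x ∈ frontier Aᶜ, u x = g x) ∧
      ∀ x ∈ Aᶜ,
        sInf ((fun y => g y - lam * ‖y‖) '' frontier Aᶜ) + lam * ‖x‖ ≤ u x ∧
        u x ≤ sSup ((fun y => g y - lam * ‖y‖) '' frontier Aᶜ) + lam * ‖x‖ :=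
  stmt12_general A hAcl hAbd h0A g hg lam
end
end
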